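/- Under strict additivity of imputed potential outcomes Yᵢ*(j) = Yᵢ^obs + z_j − z_{W_i}, the population variance of each column equals the decomposition s* = Σ_j ((N_j−1)/(N−1)) Ŝ(j,j) + Σ_j (N_j/(N−1)) {Ŷ̄(j) − Ȳ*(j)}², where Ŝ(j,j) and Ŷ̄(j) are the sample variance and mean of observed outcomes in group j, and Ȳ*(j) is the mean of the imputed outcomes under treatment j. -/

import Mathlib

/-!
Under strict additivity every centred column of `Y*` is the same vector `Yobs i - Ȳ*(W i)`, so the
total sum of squares splits over the treatment groups. Within group `j`, the usual decomposition of
the squared deviations from `Ȳ*(j)` around the group mean `Ŷ̄(j)` yields `(N_j - 1) Ŝ(j,j)` plus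
`N_j (Ŷ̄(j) - Ȳ*(j))²`.
-/

open Finset

variable {ι K : Type*} [Field K] [CharZero K]

theorem Finset.sum_sq_sub_eq_sum_sq_sub_mean_add (s : Finset ι) (f : ι → K) (c : K) :
    ∑ i ∈ s, (f i - c) ^ 2
      = ∑ i ∈ s, (f i - (∑ i ∈ s, f i) / #s) ^ 2 + #s * ((∑ i ∈ s, f i) / #s - c) ^ 2 := by
  rcases s.eq_empty_or_nonempty with rfl | hs
  · simp
  set m := (∑ i ∈ s, f i) / #s
  have hsum : ∑ i ∈ s, f i = #s * m := by
    rw [mul_div_cancel₀ _ (by simp [hs.ne_empty])]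
  calc ∑ i ∈ s, (f i - c) ^ 2
      = ∑ i ∈ s, ((f i - m) ^ 2 + 2 * (m - c) * f i + ((m - c) ^ 2 - 2 * (m - c) * m)) :=
        sum_congr rfl fun i _ => by ring
    _ = ∑ i ∈ s, (f i - m) ^ 2 + #s * (m - c) ^ 2 := by
        rw [sum_add_distrib, sum_add_distrib, ← mul_sum, hsum, sum_const, nsmul_eq_mul]
        ring

-- For a singleton both sides vanish, so the junk value `x / 0 = 0` does no harm.
theorem Finset.card_sub_one_mul_sum_sq_sub_mean_div (s : Finset ι) (f : ι → K) :
    ((#s : K) - 1) * ((∑ i ∈ s, (f i - (∑ i ∈ s, f i) / #s) ^ 2) / (#s - 1))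
      = ∑ i ∈ s, (f i - (∑ i ∈ s, f i) / #s) ^ 2 := by
  by_cases hs : #s = 1
  · obtain ⟨a, rfl⟩ := card_eq_one.mp hs
    simp
  · exact mul_div_cancel₀ _ (sub_ne_zero.mpr (by exact_mod_cast hs))

theorem sub_mean_col_eq_of_additive [Fintype ι] {κ : Type*} (Y : ι → κ → K) (a : ι → K)
    (b : κ → K) (hY : ∀ i j, Y i j = a i + b j) (i : ι) (j j' : κ) :
    Y i j - (∑ k, Y k j) / Fintype.card ι = Y i j' - (∑ k, Y k j') / Fintype.card ι := by
  have : Nonempty ι := ⟨i⟩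
  have hcard : (Fintype.card ι : K) ≠ 0 := Nat.cast_ne_zero.mpr Fintype.card_ne_zero
  have hmean : ∀ j, (∑ k, Y k j) / Fintype.card ι = (∑ k, a k) / Fintype.card ι + b j := by
    intro j
    simp only [hY, sum_add_distrib, sum_const, card_univ, nsmul_eq_mul]
    field_simp
  rw [hmean, hmean, hY, hY]
  ring

theorem stmt10_general (N J : ℕ) (W : Fin N → Fin J) (Yobs : Fin N → ℝ) (z : Fin J → ℝ)
    (Nj : Fin J → ℕ) (hNj : ∀ j, Nj j = (Finset.univ.filter fun i => W i = j).card)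
    (j₀ : Fin J) :
    let Ystar := fun (i : Fin N) (j : Fin J) => Yobs i + z j - z (W i)
    let Ystarbar := fun j : Fin J => (∑ i, Ystar i j) / N
    let Yhat := fun j : Fin J =>
      (∑ i ∈ Finset.univ.filter fun i => W i = j, Yobs i) / (Nj j : ℝ)
    let Shat := fun j : Fin J =>
      (∑ i ∈ Finset.univ.filter fun i => W i = j, (Yobs i - Yhat j) ^ 2) / ((Nj j : ℝ) - 1)
    (∑ i, (Ystar i j₀ - Ystarbar j₀) ^ 2) / ((N : ℝ) - 1)
      = (∑ j, ((Nj j : ℝ) - 1) / ((N : ℝ) - 1) * Shat j)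
        + ∑ j, (Nj j : ℝ) / ((N : ℝ) - 1) * (Yhat j - Ystarbar j) ^ 2 := by
  intro Ystar Ystarbar Yhat Shat
  obtain rfl : Nj = fun j => #{i | W i = j} := funext hNj
  have hcentred : ∀ i, Ystar i j₀ - Ystarbar j₀ = Yobs i - Ystarbar (W i) := fun i => by
    have h := sub_mean_col_eq_of_additive Ystar (fun k => Yobs k - z (W k)) z
      (fun _ _ => by ring) i j₀ (W i)
    rw [Fintype.card_fin] at h
    exact h.trans (by simp [Ystar, Ystarbar])
  have hfibers : ∑ i, (Ystar i j₀ - Ystarbar j₀) ^ 2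
      = ∑ j, ∑ i with W i = j, (Yobs i - Ystarbar j) ^ 2 := by
    rw [← sum_fiberwise univ W]
    refine sum_congr rfl fun j _ => sum_congr rfl fun i hi => ?_
    rw [hcentred, (mem_filter.mp hi).2]
  rw [hfibers, sum_div, ← sum_add_distrib]
  refine sum_congr rfl fun j _ => ?_
  rw [sum_sq_sub_eq_sum_sq_sub_mean_add, ← card_sub_one_mul_sum_sq_sub_mean_div]
  ring

/-- Variance decomposition for imputed potential outcomes under strict additivity. -/
theorem stmt10 (N J : ℕ) (hN : 2 ≤ N) (W : Fin N → Fin J) (Yobs : Fin N → ℝ) (z : Fin J → ℝ)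
    (Nj : Fin J → ℕ) (hNj : ∀ j, Nj j = (Finset.univ.filter fun i => W i = j).card)
    (hNj2 : ∀ j, 2 ≤ Nj j) (j₀ : Fin J) :
    let Ystar := fun (i : Fin N) (j : Fin J) => Yobs i + z j - z (W i)
    let Ystarbar := fun j : Fin J => (∑ i, Ystar i j) / N
    let Yhat := fun j : Fin J =>
      (∑ i ∈ Finset.univ.filter fun i => W i = j, Yobs i) / (Nj j : ℝ)
    let Shat := fun j : Fin J =>
      (∑ i ∈ Finset.univ.filter fun i => W i = j, (Yobs i - Yhat j) ^ 2) / ((Nj j : ℝ) - 1)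
    (∑ i, (Ystar i j₀ - Ystarbar j₀) ^ 2) / ((N : ℝ) - 1)
      = (∑ j, ((Nj j : ℝ) - 1) / ((N : ℝ) - 1) * Shat j)
        + ∑ j, (Nj j : ℝ) / ((N : ℝ) - 1) * (Yhat j - Ystarbar j) ^ 2 :=
  stmt10_general N J W Yobs z Nj hNj j₀
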